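/- Let c ∈ ℤ^k with S̃_c ≠ ∅, let u ∈ S̃_c, let p = π(c), and let F_p be the minimal face of Z containing p. Then dim span(F_p − p) + dim span(S̃_c − u) = k − |J_c| + dim( ker(φ) ∩ span(S̃_c − u) ), where dim denotes Module.finrank over ℝ. (Here dim span(S̃_c − u) is the dimension of any lift of the Φ-stratum S_c.) -/

import Mathlib

/-!
The map `y ↦ c - φ y` identifies the stratum `S̃_c` with the set `L` of lifts of `p` in the
half-open cube `[0,1)^k`, and `J_c` with the set of coordinates on which all of `L` vanishes.
Let `U` be the coordinate subspace `{x | x_j = 0 for j ∈ J_c}`, of dimension `k - |J_c|`.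
Averaging points of the convex set `L` gives a lift `t` with `t_j > 0` for every `j ∉ J_c`, so
`t ± ε x` stays in the cube for `x ∈ U` and small `ε`. Hence `span (L - t) = im φ ⊓ U`, and
`span (F_p - p) = π U`: the face `F_p` lies in the extreme set of points all of whose lifts in
the cube vanish on `J_c`, and it contains `π (t ± ε x)` because `p` is their midpoint.
Rank–nullity for `π` on `U` (kernel `im φ ⊓ U`) and for `φ` on `span (S̃_c - u)` gives the
formula.
-/

/-- The linear map `φ : ℝⁿ → ℝᵏ` given by pairing with the integer vectors `v j`. -/
noncomputable def phiMap {n k : ℕ} (v : Fin k → Fin n → ℤ) :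
    (Fin n → ℝ) →ₗ[ℝ] (Fin k → ℝ) where
  toFun u := fun j => ∑ i, u i * (v j i : ℝ)
  map_add' u w := by
    funext j
    simp [add_mul, Finset.sum_add_distrib]
  map_smul' r u := by
    funext j
    simp [Finset.mul_sum, mul_assoc]

/-- The map `Φ : ℝⁿ → ℤᵏ`, `Φ(u)_j = ⌈⟨u, v_j⟩⌉`. -/
noncomputable def PhiMap {n k : ℕ} (v : Fin k → Fin n → ℤ) (u : Fin n → ℝ) : Fin k → ℤ :=
  fun j => ⌈∑ i, u i * (v j i : ℝ)⌉

open Module Submodule Set Filter Topology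

theorem finrank_map_add_finrank_ker_inf {K V W : Type*} [DivisionRing K] [AddCommGroup V]
    [Module K V] [AddCommGroup W] [Module K W] [FiniteDimensional K V]
    (f : V →ₗ[K] W) (p : Submodule K V) :
    finrank K (p.map f) + finrank K ↥(LinearMap.ker f ⊓ p) = finrank K p := by
  have h := LinearMap.finrank_range_add_finrank_ker (f.domRestrict p)
  rwa [LinearMap.range_domRestrict, LinearMap.ker_domRestrict,
    (equivSubtypeMap p _).finrank_eq, map_comap_subtype, inf_comm] at h

section Cube

variable {ι : Type*}

def vanishingOn (J : Set ι) : Submodule ℝ (ι → ℝ) := ⨅ j ∈ J, LinearMap.ker (LinearMap.proj j)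

theorem mem_vanishingOn {J : Set ι} {x : ι → ℝ} : x ∈ vanishingOn J ↔ ∀ j ∈ J, x j = 0 := by
  simp [vanishingOn, Submodule.mem_iInf]

theorem finrank_vanishingOn [Fintype ι] (J : Set ι) :
    finrank ℝ (vanishingOn J) = Fintype.card ι - J.ncard := by
  classical
  unfold vanishingOn
  rw [(LinearMap.iInfKerProjEquiv ℝ (fun _ : ι => ℝ) disjoint_compl_left
      (by simp)).finrank_eq, finrank_fintype_fun_eq_card, ← Nat.card_eq_fintype_card,
    Nat.card_coe_set_eq, Set.ncard_compl, Nat.card_eq_fintype_card]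

def halfOpenCube (ι : Type*) : Set (ι → ℝ) := {x | ∀ j, x j ∈ Ico (0 : ℝ) 1}

theorem convex_halfOpenCube : Convex ℝ (halfOpenCube ι) :=
  fun _ hx _ hy _ _ ha hb hab j => convex_Ico 0 1 (hx j) (hy j) ha hb hab

def zeroCoords (L : Set (ι → ℝ)) : Set ι := {j | ∀ t ∈ L, t j = 0}

theorem isExtreme_inter_vanishingOn {C : Set (ι → ℝ)} (hC : ∀ x ∈ C, ∀ j, 0 ≤ x j)
    (J : Set ι) : IsExtreme ℝ C (C ∩ vanishingOn J) := by
  refine ⟨inter_subset_left, fun x₁ hx₁ x₂ hx₂ x ⟨_, hx⟩ ⟨a, b, ha, hb, _, hab⟩ => ?_⟩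
  refine mem_inter hx₁ (mem_vanishingOn.2 fun j hj => ?_)
  have hj : a * x₁ j + b * x₂ j = 0 := by simpa [← hab] using mem_vanishingOn.1 hx j hj
  rw [add_eq_zero_iff_of_nonneg (mul_nonneg ha.le (hC _ hx₁ j))
    (mul_nonneg hb.le (hC _ hx₂ j)), mul_eq_zero] at hj
  exact hj.1.resolve_left ha.ne'

theorem Convex.exists_mem_forall_pos [Fintype ι] {L : Set (ι → ℝ)} (hL : Convex ℝ L)
    (hne : L.Nonempty) (hnonneg : ∀ t ∈ L, ∀ j, 0 ≤ t j) :
    ∃ t ∈ L, ∀ j ∉ zeroCoords L, 0 < t j := by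
  classical
  suffices ∀ s : Finset ι, ∃ t ∈ L, ∀ j ∈ s, j ∉ zeroCoords L → 0 < t j by
    simpa using this Finset.univ
  intro s
  induction s using Finset.induction_on with
  | empty =>
    obtain ⟨t, ht⟩ := hne
    exact ⟨t, ht, by simp⟩
  | insert i s _ ih =>
    obtain ⟨t, htL, ht⟩ := ih
    by_cases hi : i ∈ zeroCoords L
    · exact ⟨t, htL, by simpa [hi] using ht⟩
    obtain ⟨r, hrL, hri⟩ : ∃ r ∈ L, r i ≠ 0 := by simpa [zeroCoords] using hi
    refine ⟨(1 / 2 : ℝ) • t + (1 / 2 : ℝ) • r, hL htL hrL (by norm_num) (by norm_num) (by norm_num),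
      ?_⟩
    simp only [Finset.mem_insert, forall_eq_or_imp, Pi.add_apply, Pi.smul_apply, smul_eq_mul]
    refine ⟨fun _ => ?_, fun j hj hjL => ?_⟩
    · linarith [hnonneg t htL i, lt_of_le_of_ne (hnonneg r hrL i) hri.symm]
    · linarith [ht j hj hjL, hnonneg r hrL j]

theorem exists_pos_add_smul_mem_halfOpenCube [Finite ι] {t x : ι → ℝ} (ht : t ∈ halfOpenCube ι)
    (hx : ∀ j, x j ≠ 0 → 0 < t j) :
    ∃ ε : ℝ, 0 < ε ∧ t + ε • x ∈ halfOpenCube ι ∧ t - ε • x ∈ halfOpenCube ι := by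
  have hev : ∀ᶠ ε in 𝓝 (0 : ℝ), ∀ j, t j + ε * x j ∈ Ico (0 : ℝ) 1 := by
    refine eventually_all.2 fun j => ?_
    by_cases hxj : x j = 0
    · simpa [hxj] using ht j
    have hcont : Tendsto (fun ε : ℝ => t j + ε * x j) (𝓝 0) (𝓝 (t j)) :=
      (continuous_const.add (continuous_id.mul continuous_const)).tendsto' _ _ (by simp)
    exact (hcont.eventually (Ioo_mem_nhds (hx j hxj) (ht j).2)).mono
      fun _ h => Ioo_subset_Ico_self h
  have hev' : ∀ᶠ ε in 𝓝[>] (0 : ℝ), (∀ j, t j + ε * x j ∈ Ico (0 : ℝ) 1) ∧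
      ∀ j, t j + -ε * x j ∈ Ico (0 : ℝ) 1 :=
    nhdsWithin_le_nhds (hev.and ((continuous_neg.tendsto' 0 0 neg_zero).eventually hev))
  obtain ⟨ε, ⟨hadd, hsub⟩, hε⟩ := (hev'.and self_mem_nhdsWithin).exists
  exact ⟨ε, hε, hadd, fun j => by simpa [sub_eq_add_neg] using hsub j⟩

end Cube

section MinimalFace

variable (𝕜 : Type*) {E : Type*} [Semiring 𝕜] [PartialOrder 𝕜] [AddCommMonoid E] [SMul 𝕜 E]

def minimalFace (C : Set E) (p : E) : Set E := ⋂₀ {F | IsExtreme 𝕜 C F ∧ p ∈ F}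

variable {𝕜} {C F : Set E} {a b p : E}

theorem minimalFace_subset (hF : IsExtreme 𝕜 C F) (hp : p ∈ F) : minimalFace 𝕜 C p ⊆ F :=
  sInter_subset_of_mem ⟨hF, hp⟩

theorem mem_minimalFace_of_mem_openSegment (ha : a ∈ C) (hb : b ∈ C)
    (hp : p ∈ openSegment 𝕜 a b) : a ∈ minimalFace 𝕜 C p :=
  mem_sInter.2 fun _ ⟨hF, hpF⟩ => hF.left_mem_of_mem_openSegment ha hb hpF hp

end MinimalFace

theorem isExtreme_image_setOf_fiber_subset {𝕜 E F : Type*} [Semiring 𝕜] [PartialOrder 𝕜]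
    [AddCommMonoid E] [Module 𝕜 E] [AddCommMonoid F] [Module 𝕜 F] (f : E →ₗ[𝕜] F)
    {C K : Set E} (hC : Convex 𝕜 C) (hK : IsExtreme 𝕜 C K) :
    IsExtreme 𝕜 (f '' C) {q ∈ f '' C | ∀ s ∈ C, f s = q → s ∈ K} := by
  refine ⟨fun q hq => hq.1, ?_⟩
  rintro _ ⟨s₁, hs₁, rfl⟩ _ ⟨s₂, hs₂, rfl⟩ q ⟨-, hq⟩ ⟨a, b, ha, hb, hab, rfl⟩
  refine ⟨⟨s₁, hs₁, rfl⟩, fun s hs hfs => ?_⟩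
  have hmem : a • s + b • s₂ ∈ K := hq _ (hC hs hs₂ ha.le hb.le hab) (by simp [hfs])
  exact hK.left_mem_of_mem_openSegment hs hs₂ hmem ⟨a, b, ha, hb, hab, rfl⟩

section CubeFiber

variable {ι : Type*} (A : Submodule ℝ (ι → ℝ)) (p : (ι → ℝ) ⧸ A)

def cubeFiber : Set (ι → ℝ) := {t ∈ halfOpenCube ι | A.mkQ t = p}

theorem convex_cubeFiber : Convex ℝ (cubeFiber A p) :=
  convex_halfOpenCube.inter ((convex_singleton p).linear_preimage A.mkQ)

theorem exists_mem_cubeFiber_add_smul_mem [Fintype ι] (hne : (cubeFiber A p).Nonempty) :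
    ∃ t ∈ cubeFiber A p, ∀ x ∈ vanishingOn (zeroCoords (cubeFiber A p)),
      ∃ ε : ℝ, 0 < ε ∧ t + ε • x ∈ halfOpenCube ι ∧ t - ε • x ∈ halfOpenCube ι := by
  obtain ⟨t, htL, ht⟩ :=
    (convex_cubeFiber A p).exists_mem_forall_pos hne fun t ht j => (ht.1 j).1
  refine ⟨t, htL, fun x hx => exists_pos_add_smul_mem_halfOpenCube htL.1 fun j hxj => ht j ?_⟩
  exact fun hj => hxj (mem_vanishingOn.1 hx j hj)

theorem span_minimalFace_sub_eq_map [Fintype ι] (hne : (cubeFiber A p).Nonempty) :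
    span ℝ ((· - p) '' minimalFace ℝ (A.mkQ '' halfOpenCube ι) p) =
      (vanishingOn (zeroCoords (cubeFiber A p))).map A.mkQ := by
  obtain ⟨t, htL, ht⟩ := exists_mem_cubeFiber_add_smul_mem A p hne
  apply le_antisymm
  · have hface := isExtreme_image_setOf_fiber_subset A.mkQ convex_halfOpenCube
      (isExtreme_inter_vanishingOn (fun x hx j => (hx j).1) (zeroCoords (cubeFiber A p)))
    have hp : p ∈ {q ∈ A.mkQ '' halfOpenCube ι | ∀ s ∈ halfOpenCube ι, A.mkQ s = q →
        s ∈ halfOpenCube ι ∩ vanishingOn (zeroCoords (cubeFiber A p))} :=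
      ⟨⟨t, htL⟩, fun s hs hsp => ⟨hs, mem_vanishingOn.2 fun j hj => hj s ⟨hs, hsp⟩⟩⟩
    rw [span_le]
    rintro _ ⟨q, hq, rfl⟩
    obtain ⟨⟨s, hs, rfl⟩, hsU⟩ := minimalFace_subset hface hp hq
    refine ⟨s - t, sub_mem (hsU s hs rfl).2 (mem_vanishingOn.2 fun j hj => hj t htL), ?_⟩
    rw [map_sub, htL.2]
  · rintro _ ⟨x, hx, rfl⟩
    obtain ⟨ε, hε, hadd, hsub⟩ := ht x hx
    have hmid : p ∈ openSegment ℝ (A.mkQ (t + ε • x)) (A.mkQ (t - ε • x)) := by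
      refine ⟨1 / 2, 1 / 2, by norm_num, by norm_num, by norm_num, ?_⟩
      rw [← htL.2, ← map_smul, ← map_smul, ← map_add]
      congr 1
      module
    have hmem := mem_minimalFace_of_mem_openSegment (mem_image_of_mem A.mkQ hadd)
      (mem_image_of_mem A.mkQ hsub) hmid
    have hdiff : A.mkQ (t + ε • x) - p = ε • A.mkQ x := by
      rw [← htL.2, ← map_sub, add_sub_cancel_left, map_smul]
    have := subset_span (R := ℝ) (mem_image_of_mem (· - p) hmem)
    rw [hdiff] at this
    exact (smul_mem_iff _ hε.ne').1 this

theorem span_cubeFiber_sub [Fintype ι] {t₀ : ι → ℝ} (ht₀ : t₀ ∈ cubeFiber A p) :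
    span ℝ ((· - t₀) '' cubeFiber A p) = A ⊓ vanishingOn (zeroCoords (cubeFiber A p)) := by
  obtain ⟨t, htL, ht⟩ := exists_mem_cubeFiber_add_smul_mem A p ⟨t₀, ht₀⟩
  apply le_antisymm
  · rw [span_le]
    rintro _ ⟨s, hs, rfl⟩
    exact ⟨(Submodule.Quotient.eq A).1 (hs.2.trans ht₀.2.symm),
      mem_vanishingOn.2 fun j hj => by simp [hj s hs, hj t₀ ht₀]⟩
  · rintro x ⟨hxA, hxU⟩
    obtain ⟨ε, hε, hadd, -⟩ := ht x hxU
    have hfib : t + ε • x ∈ cubeFiber A p :=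
      ⟨hadd, by simp [htL.2.symm, (Submodule.Quotient.mk_eq_zero A).2 hxA]⟩
    have : ε • x ∈ span ℝ ((· - t₀) '' cubeFiber A p) := by
      simpa using sub_mem (subset_span (R := ℝ) (mem_image_of_mem (· - t₀) hfib))
        (subset_span (mem_image_of_mem (· - t₀) htL))
    exact (smul_mem_iff _ hε.ne').1 this

end CubeFiber

section Stratum

variable {n k : ℕ} (v : Fin k → Fin n → ℤ) (c : Fin k → ℤ)

theorem PhiMap_eq_iff {y : Fin n → ℝ} :
    PhiMap v y = c ↔ (fun j => (c j : ℝ)) - phiMap v y ∈ halfOpenCube (Fin k) := by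
  simp only [funext_iff, PhiMap, Int.ceil_eq_iff]
  refine forall_congr' fun j => ?_
  change _ ↔ 0 ≤ (c j : ℝ) - ∑ i, y i * v j i ∧ (c j : ℝ) - ∑ i, y i * v j i < 1
  constructor <;> rintro ⟨h₁, h₂⟩ <;> constructor <;> linarith

theorem image_stratum_eq_cubeFiber :
    (fun y => (fun j => (c j : ℝ)) - phiMap v y) '' {y | PhiMap v y = c} =
      cubeFiber (LinearMap.range (phiMap v))
        ((LinearMap.range (phiMap v)).mkQ fun j => (c j : ℝ)) := by
  ext t
  constructor
  · rintro ⟨y, hy, rfl⟩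
    exact ⟨(PhiMap_eq_iff v c).1 hy, (Submodule.Quotient.eq _).2 ⟨-y, by simp⟩⟩
  · rintro ⟨ht, htc⟩
    obtain ⟨y, hy⟩ := (Submodule.Quotient.eq _).1 htc
    have ht' : (fun j => (c j : ℝ)) - phiMap v (-y) = t := by
      rw [map_neg, hy]
      abel
    exact ⟨-y, (PhiMap_eq_iff v c).2 (ht' ▸ ht), ht'⟩

theorem zeroCoords_image_stratum :
    zeroCoords ((fun y => (fun j => (c j : ℝ)) - phiMap v y) '' {y | PhiMap v y = c}) =
      {j | ∀ y ∈ {y : Fin n → ℝ | PhiMap v y = c}, ∃ m : ℤ, phiMap v y j = (m : ℝ)} := by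
  ext j
  simp only [zeroCoords, forall_mem_image, mem_ofPred_eq, Pi.sub_apply, sub_eq_zero]
  refine forall₂_congr fun y hy => ⟨fun h => ⟨c j, h.symm⟩, fun ⟨m, hm⟩ => ?_⟩
  have hceil : ⌈phiMap v y j⌉ = c j := congrFun hy j
  rw [hm, Int.ceil_intCast] at hceil
  rw [hm, hceil]

theorem map_span_stratum_sub {u : Fin n → ℝ} :
    (span ℝ ((· - u) '' {y | PhiMap v y = c})).map (phiMap v) =
      span ℝ ((· - ((fun j => (c j : ℝ)) - phiMap v u)) ''
        ((fun y => (fun j => (c j : ℝ)) - phiMap v y) '' {y | PhiMap v y = c})) := by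
  rw [← Submodule.map_neg, ← span_image, image_image, image_image]
  congr 1
  refine image_congr fun y _ => ?_
  simp only [LinearMap.neg_apply, map_sub]
  abel

end Stratum

theorem stmt9_general {n k : ℕ} (v : Fin k → Fin n → ℤ) (c : Fin k → ℤ)
    (u : Fin n → ℝ) (hu : PhiMap v u = c) :
    let π := (LinearMap.range (phiMap v)).mkQ
    let Z := π '' {x : Fin k → ℝ | ∀ j, x j ∈ Set.Ico (0 : ℝ) 1}
    let p := π (fun j => (c j : ℝ))
    let Fp := ⋂₀ {F : Set ((Fin k → ℝ) ⧸ LinearMap.range (phiMap v)) |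
      IsExtreme ℝ Z F ∧ p ∈ F}
    let J : Set (Fin k) :=
      {j | ∀ y ∈ {y : Fin n → ℝ | PhiMap v y = c}, ∃ m : ℤ, phiMap v y j = (m : ℝ)}
    let spanS := Submodule.span ℝ ((fun s => s - u) '' {y : Fin n → ℝ | PhiMap v y = c})
    Module.finrank ℝ ↥(Submodule.span ℝ ((fun x => x - p) '' Fp)) +
      Module.finrank ℝ ↥spanS =
    k - J.ncard + Module.finrank ℝ ↥(LinearMap.ker (phiMap v) ⊓ spanS) := by
  intro π Z p Fp J spanS
  have hL := image_stratum_eq_cubeFiber v c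
  have hJ : J = zeroCoords (cubeFiber (LinearMap.range (phiMap v)) p) := by
    rw [← hL, zeroCoords_image_stratum]
  have hu' : (fun j => (c j : ℝ)) - phiMap v u ∈ cubeFiber (LinearMap.range (phiMap v)) p :=
    hL ▸ mem_image_of_mem _ hu
  have hFp : span ℝ ((· - p) '' Fp) = (vanishingOn J).map π := by
    rw [hJ]
    exact span_minimalFace_sub_eq_map _ p ⟨_, hu'⟩
  have hS : spanS.map (phiMap v) = LinearMap.range (phiMap v) ⊓ vanishingOn J := by
    rw [map_span_stratum_sub, hL, hJ]
    exact span_cubeFiber_sub _ p hu'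
  have hπ := finrank_map_add_finrank_ker_inf π (vanishingOn J)
  have hφ := finrank_map_add_finrank_ker_inf (phiMap v) spanS
  have hU : finrank ℝ (vanishingOn J) = k - J.ncard := by
    rw [finrank_vanishingOn, Fintype.card_fin]
  rw [Submodule.ker_mkQ, ← hS] at hπ
  rw [hFp]
  omega

/-- Dimension formula: `dim F_p + dim S = k − |J_c| + dim(ker φ ∩ span(S̃_c − u))`, where `F_p`
is the minimal face of the half-open zonotope `Z` containing `p = π(c)` and `S̃_c` is the lifted
stratum containing `u`. -/
theorem stmt9 {n k : ℕ} (v : Fin k → Fin n → ℤ) (c : Fin k → ℤ)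
    (hc : ({y : Fin n → ℝ | PhiMap v y = c}).Nonempty)
    (u : Fin n → ℝ) (hu : PhiMap v u = c) :
    let π := (LinearMap.range (phiMap v)).mkQ
    let Z := π '' {x : Fin k → ℝ | ∀ j, x j ∈ Set.Ico (0 : ℝ) 1}
    let p := π (fun j => (c j : ℝ))
    let Fp := ⋂₀ {F : Set ((Fin k → ℝ) ⧸ LinearMap.range (phiMap v)) |
      IsExtreme ℝ Z F ∧ p ∈ F}
    let J : Set (Fin k) :=
      {j | ∀ y ∈ {y : Fin n → ℝ | PhiMap v y = c}, ∃ m : ℤ, phiMap v y j = (m : ℝ)}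
    let spanS := Submodule.span ℝ ((fun s => s - u) '' {y : Fin n → ℝ | PhiMap v y = c})
    Module.finrank ℝ ↥(Submodule.span ℝ ((fun x => x - p) '' Fp)) +
      Module.finrank ℝ ↥spanS =
    k - J.ncard + Module.finrank ℝ ↥(LinearMap.ker (phiMap v) ⊓ spanS) :=
  stmt9_general v c u hu
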